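/- arXiv:quant-ph/0608085 — 7 statements merged into one kernel-verified Lean document; each statement's English description precedes it below -/
import Mathlib

section
/- Let x, y, z be real numbers and let σ = ρ(x,y,z) ⊗ ρ(x,y,z) be the 4×4 Kronecker product matrix. Then the 2×2 matrix formed from σ's entries at the even-parity basis indices, namely [[σ_{00,00}, σ_{00,11}], [σ_{11,00}, σ_{11,11}]], equals ((1+z²)/2) · ρ( (x²−y²)/(1+z²), 2xy/(1+z²), 2z/(1+z²) ). In particular, a successful postselected parity check maps the Bloch vector (x,y,z) to ((x²−y²)/(1+z²), 2xy/(1+z²), 2z/(1+z²)). -/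
/-!
The even-parity block of `ρ ⊗ ρ` is the entrywise square of `ρ`. Writing
`ρ(x,y,z) = ½ [[1+z, x−iy], [x+iy, 1−z]]`, the squares of the entries are
`(1±z)² = (1+z²) ± 2z` and `(x±iy)² = (x²−y²) ± 2ixy`, which is the matrix of
`(1+z²)/2 · ρ` at the Bloch vector `(x²−y², 2xy, 2z)/(1+z²)`.
-/

open Matrix Kronecker

noncomputable def PX : Matrix (Fin 2) (Fin 2) ℂ := !![0, 1; 1, 0]
noncomputable def PY : Matrix (Fin 2) (Fin 2) ℂ := !![0, -Complex.I; Complex.I, 0]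
noncomputable def PZ : Matrix (Fin 2) (Fin 2) ℂ := !![1, 0; 0, -1]

/-- The Bloch-sphere state `ρ(x,y,z) = (1/2)(I + xX + yY + zZ)`. -/
noncomputable def rho (x y z : ℝ) : Matrix (Fin 2) (Fin 2) ℂ :=
  (1 / 2 : ℂ) • (1 + (x : ℂ) • PX + (y : ℂ) • PY + (z : ℂ) • PZ)

lemma rho_eq_smul_of (x y z : ℝ) :
    rho x y z = (1 / 2 : ℂ) • !![1 + (z : ℂ), x - Complex.I * y; x + Complex.I * y, 1 - z] := by
  rw [rho, PX, PY, PZ, Matrix.one_fin_two]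
  ext i j
  fin_cases i <;> fin_cases j <;> simp <;> ring

lemma smul_rho_div (s x y z : ℝ) (hs : s ≠ 0) :
    ((s / 2 : ℝ) : ℂ) • rho (x / s) (y / s) (z / s) =
      (1 / 4 : ℂ) • !![s + (z : ℂ), x - Complex.I * y; x + Complex.I * y, s - z] := by
  have hs' : (s : ℂ) ≠ 0 := Complex.ofReal_ne_zero.mpr hs
  rw [rho_eq_smul_of, smul_smul]
  ext i j
  fin_cases i <;> fin_cases j <;> simp <;> field_simp <;> ring

lemma kronecker_self_evenParityBlock {R : Type*} [Mul R] (A : Matrix (Fin 2) (Fin 2) R) :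
    !![(A ⊗ₖ A) (0, 0) (0, 0), (A ⊗ₖ A) (0, 0) (1, 1);
        (A ⊗ₖ A) (1, 1) (0, 0), (A ⊗ₖ A) (1, 1) (1, 1)] =
      !![A 0 0 * A 0 0, A 0 1 * A 0 1; A 1 0 * A 1 0, A 1 1 * A 1 1] :=
  rfl

/-- A successful postselected parity check on two copies of `ρ(x,y,z)` extracts the
even-parity `2×2` submatrix, which equals
`((1+z²)/2) · ρ((x²−y²)/(1+z²), 2xy/(1+z²), 2z/(1+z²))`. -/
theorem stmt_2 (x y z : ℝ) :
    let σ : Matrix (Fin 2 × Fin 2) (Fin 2 × Fin 2) ℂ := rho x y z ⊗ₖ rho x y z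
    !![σ (0, 0) (0, 0), σ (0, 0) (1, 1); σ (1, 1) (0, 0), σ (1, 1) (1, 1)] =
      (((1 + z ^ 2) / 2 : ℝ) : ℂ) •
        rho ((x ^ 2 - y ^ 2) / (1 + z ^ 2)) (2 * x * y / (1 + z ^ 2))
          (2 * z / (1 + z ^ 2)) := by
  intro σ
  rw [kronecker_self_evenParityBlock, smul_rho_div _ _ _ _ (by positivity), rho_eq_smul_of]
  ext i j
  fin_cases i <;> fin_cases j <;> simp <;> grind [Complex.I_sq]
end

section
/- For every real number x with 0 < x < 1, the inequality x²(3+x²)/(1+2x²+2x⁴) > x holds if and only if 1/2 < x and x³ + x < 1. (Thus the combined parity-check/dual-parity-check distillation map on the axis x = z, (x,0,x) ↦ (x²(3+x²)/(1+2x²+2x⁴))·(1,0,1), strictly increases x exactly on the interval between 1/2 and the real root of x³+x−1 ≈ 0.68.) -/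
/-- For every real `x` with `0 < x < 1`, the parity-check/dual-parity-check iteration
function `x²(3+x²)/(1+2x²+2x⁴)` exceeds `x` iff `1/2 < x` and `x³ + x < 1`. -/
theorem stmt_3 (x : ℝ) (hx0 : 0 < x) (hx1 : x < 1) :
    x ^ 2 * (3 + x ^ 2) / (1 + 2 * x ^ 2 + 2 * x ^ 4) > x ↔
      1 / 2 < x ∧ x ^ 3 + x < 1 := by
  have hd : (0:ℝ) < 1 + 2 * x ^ 2 + 2 * x ^ 4 := by positivity
  rw [gt_iff_lt, lt_div_iff₀ hd]
  constructor
  · intro h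
    constructor
    · by_contra h'
      push_neg at h'
      have h3 : (0:ℝ) ≤ 1 - x ^ 3 - x := by nlinarith
      nlinarith [mul_nonneg (mul_nonneg (by linarith : (0:ℝ) ≤ 1 - 2*x) h3) hx0.le]
    · by_contra h'
      push_neg at h'
      nlinarith [mul_pos hx0 hx0, sq_nonneg (2*x-1), mul_pos (mul_pos hx0 hx0) hx0]
  · rintro ⟨h1, h2⟩
    nlinarith [mul_pos (sub_pos.mpr h1) (sub_pos.mpr h2), mul_pos hx0 hx0]
end

section
/- For every real number f with 0 < f < 1, the inequality (10f³ − 2f⁵)/(3 + 5f⁴) > f holds if and only if f² > 3/7. (Thus the five-qubit-code distillation iteration on states ρ(f/√3, f/√3, f/√3) strictly increases the fidelity parameter f exactly when f > √(3/7), i.e. when |x|+|y|+|z| = √3·f > 3/√7.) -/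
/-- The five-qubit-code distillation iteration strictly increases the fidelity
parameter `f ∈ (0,1)` exactly when `f² > 3/7`. -/
theorem stmt_5 (f : ℝ) (hf0 : 0 < f) (hf1 : f < 1) :
    (10 * f ^ 3 - 2 * f ^ 5) / (3 + 5 * f ^ 4) > f ↔ f ^ 2 > 3 / 7 := by
  have hd : (0:ℝ) < 3 + 5 * f ^ 4 := by positivity
  rw [gt_iff_lt, lt_div_iff₀ hd]
  have h1 : 0 < 1 - f ^ 2 := by nlinarith
  have hp : 0 < f * (1 - f ^ 2) := mul_pos hf0 h1
  constructor
  · intro h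
    by_contra hc
    push_neg at hc
    nlinarith [mul_nonneg hp.le (show (0:ℝ) ≤ 3 - 7 * f ^ 2 by linarith)]
  · intro h
    nlinarith [mul_pos hp (show (0:ℝ) < 7 * f ^ 2 - 3 by linarith)]
end

section
/- For every natural number n ≥ 1, the identity 6 · 2^{n−1} · Π_{k=0}^{n−2} (2^{2n−k} − 2^k) = (2^n − 1) · 2^n · (Π_{k=1}^{n} (2^k + 1)) · (Π_{k=0}^{n−2} (2^{n−1} − 2^k)) holds (with empty products equal to 1). (Consequently the number of n-to-1-qubit stabilizer reductions, 2^{n−1} · Π_{k=0}^{n−2}(2^{2n−k} − 2^k) / Π_{k=0}^{n−2}(2^{n−1} − 2^k), equals (1/6)(2^n − 1)·N where N = 2^n · Π_{k=1}^{n}(2^k+1) is the number of n-qubit stabilizer states.) -/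
/-!
Factor `2^{2n-k} - 2^k = 2^k (2^{n-k} - 1)(2^{n-k} + 1)` and `2^{n-1} - 2^k = 2^k (2^{n-1-k} - 1)`.
The powers `2^k` then cancel, and after reindexing by `j = n - k` both sides become
`6 · 2^{n-1} · Π_{j=2}^{n} (2^j - 1)(2^j + 1)`: on the right, `2^n - 1` completes
`Π_{j=1}^{n-1} (2^j - 1)`, while the `j = 1` factors `2^1 - 1 = 1` and `2^1 + 1 = 3`
together with `2^n = 2 · 2^{n-1}` account for the `6`.
-/

open Finset

namespace Nat

theorem pow_sub_pow_eq_pow_mul {k n : ℕ} (b : ℕ) (h : k ≤ n) :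
    b ^ n - b ^ k = b ^ k * (b ^ (n - k) - 1) := by
  rw [Nat.mul_sub, mul_one, ← pow_add, Nat.add_sub_cancel' h]

theorem pow_two_mul_sub_one (b j : ℕ) : b ^ (2 * j) - 1 = (b ^ j - 1) * (b ^ j + 1) := by
  rw [pow_mul', ← one_pow 2, Nat.sq_sub_sq, one_pow, mul_comm]

theorem two_pow_sub_two_pow_eq_mul {k n : ℕ} (h : k ≤ n) :
    2 ^ (2 * n - k) - 2 ^ k = 2 ^ k * ((2 ^ (n - k) - 1) * (2 ^ (n - k) + 1)) := by
  rw [pow_sub_pow_eq_pow_mul (n := 2 * n - k) 2 (by omega),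
    show 2 * n - k - k = 2 * (n - k) by omega, pow_two_mul_sub_one]

end Nat

theorem Finset.prod_range_sub_eq_prod_Ico {M : Type*} [CommMonoid M] (f : ℕ → M) {m n : ℕ}
    (h : m ≤ n + 1) : ∏ k ∈ range m, f (n - k) = ∏ j ∈ Ico (n + 1 - m) (n + 1), f j := by
  rw [range_eq_Ico, prod_Ico_reflect _ _ h, Nat.sub_zero]

/-- The product identity behind the count of `n`-to-1-qubit stabilizer reductions:
`6 · 2^{n−1} · Π_{k=0}^{n−2} (2^{2n−k} − 2^k)
  = (2^n − 1) · 2^n · (Π_{k=1}^{n} (2^k + 1)) · (Π_{k=0}^{n−2} (2^{n−1} − 2^k))`. -/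
theorem stmt_9 (n : ℕ) (hn : 1 ≤ n) :
    6 * 2 ^ (n - 1) * ∏ k ∈ Finset.range (n - 1), (2 ^ (2 * n - k) - 2 ^ k) =
      (2 ^ n - 1) * 2 ^ n * (∏ k ∈ Finset.Icc 1 n, (2 ^ k + 1)) *
        ∏ k ∈ Finset.range (n - 1), (2 ^ (n - 1) - 2 ^ k) := by
  obtain ⟨m, rfl⟩ : ∃ m, n = m + 1 := ⟨n - 1, by omega⟩
  simp only [Nat.add_sub_cancel]
  rw [prod_congr rfl fun k hk =>
      Nat.two_pow_sub_two_pow_eq_mul (n := m + 1) (by simp at hk; omega),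
    prod_congr rfl fun k hk => Nat.pow_sub_pow_eq_pow_mul 2 (n := m) (by simp at hk; omega)]
  simp only [prod_mul_distrib]
  rw [prod_range_sub_eq_prod_Ico (fun j => 2 ^ j - 1) (n := m + 1) (by omega),
    prod_range_sub_eq_prod_Ico (fun j => 2 ^ j + 1) (n := m + 1) (by omega),
    prod_range_sub_eq_prod_Ico (fun j => 2 ^ j - 1) (n := m) (by omega),
    show m + 1 + 1 - m = 2 by omega, Nat.add_sub_cancel_left]
  have h_plus :
      ∏ k ∈ Icc 1 (m + 1), (2 ^ k + 1) = 3 * ∏ j ∈ Ico 2 (m + 2), (2 ^ j + 1) := by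
    rw [← Ico_add_one_right_eq_Icc, prod_eq_prod_Ico_succ_bot (by omega)]
    rfl
  have h_minus : (2 ^ (m + 1) - 1) * ∏ j ∈ Ico 1 (m + 1), (2 ^ j - 1) =
      ∏ j ∈ Ico 2 (m + 2), (2 ^ j - 1) := by
    rw [mul_comm, ← prod_Ico_succ_top (by omega), prod_eq_prod_Ico_succ_bot (by omega)]
    simp
  rw [h_plus, ← h_minus, pow_succ]
  ring
end

section
/- For every natural number n ≥ 1, the number of n-dimensional subspaces W of the 2n-dimensional vector space (ZMod 2)^{2n} on which the standard symplectic bilinear form ω((a,b),(c,d)) = a·d + b·c (where a,b,c,d ∈ (ZMod 2)^n and · is the dot product) vanishes identically equals Π_{k=1}^{n} (2^k + 1). -/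
/-!
Count isotropic frames, i.e. linearly independent `n`-tuples of pairwise orthogonal vectors, in
two ways. Choosing the vectors one at a time, the next one must lie in the orthogonal of the span
of the previous `i` (of dimension `2n - i`) but outside that span (of dimension `i`), so there are
`∏_{i<n} (q^(2n-i) - q^i)` frames. Grouped by the Lagrangian they span, every Lagrangian carries
`|GL_n(𝔽_q)| = ∏_{i<n} (q^n - q^i)` frames. Since `q^(2n-i) - q^i = (q^(n-i) + 1)(q^n - q^i)`,
the number of Lagrangians is `∏_{k=1}^n (q^k + 1)`.
-/

open Module Submodule Set

theorem Nat.pow_two_mul_sub_sub_pow {q n i : ℕ} (hq : 0 < q) (hi : i ≤ n) :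
    q ^ (2 * n - i) - q ^ i = (q ^ (n - i) + 1) * (q ^ n - q ^ i) := by
  have h₁ : q ^ i ≤ q ^ n := Nat.pow_le_pow_right hq hi
  have h₂ : q ^ i ≤ q ^ (2 * n - i) := Nat.pow_le_pow_right hq (by omega)
  have e₁ : q ^ (2 * n - i) = q ^ (n - i) * q ^ n := by rw [← pow_add]; congr 1; omega
  have e₂ : q ^ (n - i) * q ^ i = q ^ n := by rw [← pow_add, Nat.sub_add_cancel hi]
  zify [h₁, h₂] at e₁ e₂ ⊢
  linear_combination e₁ + e₂

theorem Finset.prod_range_sub_eq_prod_Icc {M : Type*} [CommMonoid M] (f : ℕ → M) (n : ℕ) :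
    ∏ i ∈ Finset.range n, f (n - i) = ∏ k ∈ Finset.Icc 1 n, f k :=
  Finset.prod_nbij' (n - ·) (n - ·) (by simp; omega) (by simp; omega) (by simp; omega)
    (by simp; omega) fun _ _ => rfl

namespace Submodule

variable {K V : Type*} [Field K] [AddCommGroup V] [Module K V]

theorem natCard_sdiff_of_le [Fintype K] [Finite V] {S T : Submodule K V} (h : S ≤ T) :
    Nat.card ((T : Set V) \ S : Set V) =
      Fintype.card K ^ finrank K T - Fintype.card K ^ finrank K S := by
  rw [Nat.card_coe_set_eq, Set.ncard_sdiff h, ← Nat.card_coe_set_eq, ← Nat.card_coe_set_eq,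
    SetLike.coe_sort_coe, SetLike.coe_sort_coe, natCard_eq_pow_finrank (K := K) (V := T),
    natCard_eq_pow_finrank (K := K) (V := S), Nat.card_eq_fintype_card]

def linearIndependentSpanEqEquiv [FiniteDimensional K V] (W : Submodule K V) {m : ℕ}
    (hW : finrank K W = m) :
    {t : Fin m → V // LinearIndependent K t ∧ span K (Set.range t) = W} ≃
      {s : Fin m → W // LinearIndependent K s} where
  toFun t := ⟨fun i => ⟨t.1 i, t.2.2.le (subset_span ⟨i, rfl⟩)⟩, t.2.1.of_comp W.subtype⟩
  invFun s := by
    refine ⟨W.subtype ∘ s.1, s.2.map' W.subtype W.ker_subtype, ?_⟩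
    rw [Set.range_comp, span_image, s.2.span_eq_top_of_card_eq_finrank' (by simp [hW]),
      map_top, range_subtype]
  left_inv _ := rfl
  right_inv _ := rfl

end Submodule

namespace LinearMap.BilinForm

variable {K V : Type*} [Field K] [AddCommGroup V] [Module K V]

def IsTotallyIsotropic (B : LinearMap.BilinForm K V) (W : Submodule K V) : Prop :=
  ∀ u ∈ W, ∀ v ∈ W, B u v = 0

def IsIsotropicFrame (B : LinearMap.BilinForm K V) {k : ℕ} (t : Fin k → V) : Prop :=
  LinearIndependent K t ∧ ∀ i j, B (t i) (t j) = 0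

variable {B : LinearMap.BilinForm K V}

theorem isTotallyIsotropic_iff_le_orthogonal {W : Submodule K V} :
    B.IsTotallyIsotropic W ↔ W ≤ B.orthogonal W :=
  ⟨fun h v hv u hu => h u hu v hv, fun h u hu _ hv => h hv u hu⟩

theorem mem_orthogonal_span_range_iff {ι : Type*} {t : ι → V} {v : V} :
    v ∈ B.orthogonal (span K (Set.range t)) ↔ ∀ i, B (t i) v = 0 := by
  refine ⟨fun h i => h _ (subset_span ⟨i, rfl⟩), fun h u hu => ?_⟩
  have : span K (Set.range t) ≤ ker (B.flip v) := span_le.2 (by rintro _ ⟨i, rfl⟩; exact h i)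
  exact this hu

theorem isTotallyIsotropic_span_range_iff {ι : Type*} {t : ι → V} :
    B.IsTotallyIsotropic (span K (Set.range t)) ↔ ∀ i j, B (t i) (t j) = 0 := by
  simp only [isTotallyIsotropic_iff_le_orthogonal, span_le, range_subset_iff, SetLike.mem_coe,
    mem_orthogonal_span_range_iff]
  exact forall_comm

theorem IsIsotropicFrame.isTotallyIsotropic_span {k : ℕ} {t : Fin k → V}
    (ht : B.IsIsotropicFrame t) : B.IsTotallyIsotropic (span K (Set.range t)) :=
  isTotallyIsotropic_span_range_iff.2 ht.2

theorem isIsotropicFrame_cons_iff (hB : B.IsAlt) {k : ℕ} {s : Fin k → V} {v : V} :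
    B.IsIsotropicFrame (Fin.cons v s : Fin (k + 1) → V) ↔
      B.IsIsotropicFrame s ∧
        v ∈ (B.orthogonal (span K (Set.range s)) : Set V) \ span K (Set.range s) := by
  have hrefl : ∀ j, B v (s j) = 0 ↔ B (s j) v = 0 := fun j => ⟨hB.isRefl _ _, hB.isRefl _ _⟩
  simp only [IsIsotropicFrame, linearIndependent_finCons, Fin.forall_fin_succ, Fin.cons_zero,
    Fin.cons_succ, hB.self_eq_zero, hrefl, forall_and, mem_sdiff, SetLike.mem_coe,
    mem_orthogonal_span_range_iff]
  tauto

def isotropicFrameSuccEquiv (hB : B.IsAlt) (k : ℕ) :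
    {t : Fin (k + 1) → V // B.IsIsotropicFrame t} ≃
      Σ s : {s : Fin k → V // B.IsIsotropicFrame s},
        (B.orthogonal (span K (Set.range s.1)) \ span K (Set.range s.1) : Set V) where
  toFun t :=
    have h := (isIsotropicFrame_cons_iff hB).1 (Fin.cons_self_tail t.1 ▸ t.2)
    ⟨⟨Fin.tail t.1, h.1⟩, ⟨t.1 0, h.2⟩⟩
  invFun s := ⟨Fin.cons s.2.1 s.1.1, (isIsotropicFrame_cons_iff hB).2 ⟨s.1.2, s.2.2⟩⟩
  left_inv _ := by simp only [Fin.cons_self_tail]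
  right_inv _ := rfl

section Counting

variable [Fintype K] [Finite V]

theorem natCard_isIsotropicFrame (hB : B.IsAlt) (hB' : B.Nondegenerate) (k : ℕ) :
    Nat.card {t : Fin k → V // B.IsIsotropicFrame t} =
      ∏ i ∈ Finset.range k, (Fintype.card K ^ (finrank K V - i) - Fintype.card K ^ i) := by
  induction k with
  | zero =>
    have hall (t : Fin 0 → V) : B.IsIsotropicFrame t :=
      ⟨linearIndependent_empty_type, fun i => i.elim0⟩
    simp [Nat.card_congr (Equiv.subtypeUnivEquiv hall)]
  | succ k ih =>
    have hfiber (s : {s : Fin k → V // B.IsIsotropicFrame s}) :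
        Nat.card ((B.orthogonal (span K (Set.range s.1)) : Set V) \ span K (Set.range s.1) :
          Set V) = Fintype.card K ^ (finrank K V - k) - Fintype.card K ^ k := by
      rw [Submodule.natCard_sdiff_of_le
          (isTotallyIsotropic_iff_le_orthogonal.1 s.2.isTotallyIsotropic_span),
        finrank_orthogonal hB', finrank_span_eq_card s.2.1, Fintype.card_fin]
    have := Fintype.ofFinite {s : Fin k → V // B.IsIsotropicFrame s}
    rw [Nat.card_congr (isotropicFrameSuccEquiv hB k), Nat.card_sigma,
      Finset.sum_congr rfl fun s _ => hfiber s, Finset.sum_const, Finset.card_univ,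
      ← Nat.card_eq_fintype_card, ih, smul_eq_mul, Finset.prod_range_succ]

theorem natCard_isTotallyIsotropic_mul (m : ℕ) :
    Nat.card {W : Submodule K V // finrank K W = m ∧ B.IsTotallyIsotropic W} *
        ∏ i ∈ Finset.range m, (Fintype.card K ^ m - Fintype.card K ^ i) =
      Nat.card {t : Fin m → V // B.IsIsotropicFrame t} := by
  let spanFrame (t : {t : Fin m → V // B.IsIsotropicFrame t}) :
      {W : Submodule K V // finrank K W = m ∧ B.IsTotallyIsotropic W} :=
    ⟨span K (Set.range t.1), by rw [finrank_span_eq_card t.2.1, Fintype.card_fin],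
      t.2.isTotallyIsotropic_span⟩
  have hfiber (W : {W : Submodule K V // finrank K W = m ∧ B.IsTotallyIsotropic W}) :
      Nat.card {t // spanFrame t = W} =
        ∏ i ∈ Finset.range m, (Fintype.card K ^ m - Fintype.card K ^ i) := by
    have e : {t // spanFrame t = W} ≃
        {t : Fin m → V // LinearIndependent K t ∧ span K (Set.range t) = W.1} :=
      (Equiv.subtypeEquivRight fun _ => Subtype.ext_iff).trans <|
        (Equiv.subtypeSubtypeEquivSubtypeInter B.IsIsotropicFrame
          fun t => span K (Set.range t) = W.1).trans <|
          Equiv.subtypeEquivRight fun t => ⟨fun h => ⟨h.1.1, h.2⟩, fun h =>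
            ⟨⟨h.1, isTotallyIsotropic_span_range_iff.1 (h.2 ▸ W.2.2)⟩, h.2⟩⟩
    rw [Nat.card_congr (e.trans (W.1.linearIndependentSpanEqEquiv W.2.1)),
      card_linearIndependent W.2.1.ge, W.2.1]
    exact Fin.prod_univ_eq_prod_range (fun i => Fintype.card K ^ m - Fintype.card K ^ i) m
  have := Fintype.ofFinite {W : Submodule K V // finrank K W = m ∧ B.IsTotallyIsotropic W}
  rw [Nat.card_congr (Equiv.sigmaFiberEquiv spanFrame).symm, Nat.card_sigma,
    Finset.sum_congr rfl fun W _ => hfiber W, Finset.sum_const, Finset.card_univ,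
    ← Nat.card_eq_fintype_card (α := {W : Submodule K V // _}), smul_eq_mul]

theorem natCard_lagrangian (hB : B.IsAlt) (hB' : B.Nondegenerate) {n : ℕ}
    (hV : finrank K V = 2 * n) :
    Nat.card {W : Submodule K V // finrank K W = n ∧ B.IsTotallyIsotropic W} =
      ∏ k ∈ Finset.Icc 1 n, (Fintype.card K ^ k + 1) := by
  have hq : 1 < Fintype.card K := Fintype.one_lt_card
  have hGL : 0 < ∏ i ∈ Finset.range n, (Fintype.card K ^ n - Fintype.card K ^ i) :=
    Finset.prod_pos fun i hi => Nat.sub_pos_of_lt (Nat.pow_lt_pow_right hq (by simpa using hi))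
  refine Nat.eq_of_mul_eq_mul_right hGL ?_
  rw [natCard_isTotallyIsotropic_mul, natCard_isIsotropicFrame hB hB', hV,
    ← Finset.prod_range_sub_eq_prod_Icc, ← Finset.prod_mul_distrib]
  exact Finset.prod_congr rfl fun i hi =>
    Nat.pow_two_mul_sub_sub_pow (by omega) (Finset.mem_range.1 hi).le

end Counting

end LinearMap.BilinForm

section HyperbolicForm

open Matrix

variable (R ι : Type*) [CommRing R] [Fintype ι]

/-- In characteristic `2` this is the standard symplectic form. -/
def hyperbolicForm : LinearMap.BilinForm R ((ι → R) × (ι → R)) :=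
  (dotProductBilin R R).compl₁₂ (LinearMap.fst R _ _) (LinearMap.snd R _ _) +
    (dotProductBilin R R).compl₁₂ (LinearMap.snd R _ _) (LinearMap.fst R _ _)

variable {R ι}

theorem hyperbolicForm_apply (u v : (ι → R) × (ι → R)) :
    hyperbolicForm R ι u v = u.1 ⬝ᵥ v.2 + u.2 ⬝ᵥ v.1 :=
  rfl

theorem isSymm_hyperbolicForm : (hyperbolicForm R ι).IsSymm :=
  ⟨fun u v => by simp only [hyperbolicForm_apply, dotProduct_comm u.1,
    dotProduct_comm u.2, add_comm]⟩

theorem isAlt_hyperbolicForm [CharP R 2] : (hyperbolicForm R ι).IsAlt := fun v => by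
  rw [hyperbolicForm_apply, dotProduct_comm v.2, CharTwo.add_self_eq_zero]

theorem nondegenerate_hyperbolicForm : (hyperbolicForm R ι).Nondegenerate := by
  classical
  refine LinearMap.IsRefl.nondegenerate_iff_separatingLeft
    (isSymm_hyperbolicForm (R := R) (ι := ι)).isRefl |>.2 fun u hu => ?_
  ext i
  · simpa [hyperbolicForm_apply] using hu (0, Pi.single i 1)
  · simpa [hyperbolicForm_apply] using hu (Pi.single i 1, 0)

end HyperbolicForm

theorem stmt_10_general (n : ℕ) :
    Nat.card {W : Submodule (ZMod 2) ((Fin n → ZMod 2) × (Fin n → ZMod 2)) //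
      Module.finrank (ZMod 2) W = n ∧
      ∀ u ∈ W, ∀ v ∈ W,
        (∑ i, u.1 i * v.2 i) + (∑ i, u.2 i * v.1 i) = (0 : ZMod 2)} =
    ∏ k ∈ Finset.Icc 1 n, (2 ^ k + 1) := by
  have hV : finrank (ZMod 2) ((Fin n → ZMod 2) × (Fin n → ZMod 2)) = 2 * n := by
    simp [two_mul]
  have h := LinearMap.BilinForm.natCard_lagrangian isAlt_hyperbolicForm
    nondegenerate_hyperbolicForm hV
  rw [ZMod.card] at h
  exact h

/-- The number of Lagrangian subspaces of the standard symplectic space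
`(ZMod 2)^n × (ZMod 2)^n`: for `n ≥ 1`, the number of `n`-dimensional subspaces
on which the symplectic form `ω((a,b),(c,d)) = a·d + b·c` vanishes identically
is `Π_{k=1}^{n} (2^k + 1)`. -/
theorem stmt_10 (n : ℕ) (hn : 1 ≤ n) :
    Nat.card {W : Submodule (ZMod 2) ((Fin n → ZMod 2) × (Fin n → ZMod 2)) //
      Module.finrank (ZMod 2) W = n ∧
      ∀ u ∈ W, ∀ v ∈ W,
        (∑ i, u.1 i * v.2 i) + (∑ i, u.2 i * v.1 i) = (0 : ZMod 2)} =
    ∏ k ∈ Finset.Icc 1 n, (2 ^ k + 1) :=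
  stmt_10_general n
end

section
/- The two-qubit state ρ₁ := (1/4)(I⊗I) + (1/12)(I⊗Y + I⊗Z − X⊗X + Y⊗X + Z⊗X) is not a convex combination of two-qubit stabilizer states; that is, ρ₁ does not lie in the convex hull of the finite set of matrices (1/4)(I⊗I + A + B + AB) where A = s·(P₁⊗P₂), B = t·(Q₁⊗Q₂) range over all choices with P₁,P₂,Q₁,Q₂ ∈ {I,X,Y,Z}, s,t ∈ {1,−1}, A ≠ ±(I⊗I), B ≠ ±(I⊗I), A ≠ ±B, and AB = BA. -/
open Matrix Kronecker

noncomputable def Id2 : Matrix (Fin 2) (Fin 2) ℂ := 1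
/-- The four Pauli matrices `I, X, Y, Z`. -/
noncomputable def Pauli : Fin 4 → Matrix (Fin 2) (Fin 2) ℂ := ![Id2, PX, PY, PZ]

/-- The set of the 60 two-qubit stabilizer states
`(1/4)(I⊗I + A + B + AB)` with `A = s·(P₁⊗P₂)`, `B = t·(Q₁⊗Q₂)`,
`s, t ∈ {1, −1}`, `A ≠ ±I⊗I`, `B ≠ ±I⊗I`, `A ≠ ±B`, `AB = BA`. -/
noncomputable def twoQubitStabStates : Set (Matrix (Fin 2 × Fin 2) (Fin 2 × Fin 2) ℂ) :=
  {σ | ∃ (p₁ p₂ q₁ q₂ : Fin 4) (s t : ℂ) (A B : Matrix (Fin 2 × Fin 2) (Fin 2 × Fin 2) ℂ),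
    (s = 1 ∨ s = -1) ∧ (t = 1 ∨ t = -1) ∧
    A = s • (Pauli p₁ ⊗ₖ Pauli p₂) ∧ B = t • (Pauli q₁ ⊗ₖ Pauli q₂) ∧
    A ≠ Id2 ⊗ₖ Id2 ∧ A ≠ -(Id2 ⊗ₖ Id2) ∧
    B ≠ Id2 ⊗ₖ Id2 ∧ B ≠ -(Id2 ⊗ₖ Id2) ∧
    A ≠ B ∧ A ≠ -B ∧ A * B = B * A ∧
    σ = (1 / 4 : ℂ) • (Id2 ⊗ₖ Id2 + A + B + A * B)}

/-- The two-qubit state `ρ₁ = (1/4)I⊗I + (1/12)(I⊗Y + I⊗Z − X⊗X + Y⊗X + Z⊗X)`. -/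
noncomputable def rho1 : Matrix (Fin 2 × Fin 2) (Fin 2 × Fin 2) ℂ :=
  (1 / 4 : ℂ) • (Id2 ⊗ₖ Id2) +
    (1 / 12 : ℂ) • (Id2 ⊗ₖ PY + Id2 ⊗ₖ PZ - PX ⊗ₖ PX + PY ⊗ₖ PX + PZ ⊗ₖ PX)

/-! The witness `W = I⊗Y + I⊗Z − X⊗X + Y⊗X + Z⊗X` satisfies `tr(ρ₁ W) = 5/3`, since `ρ₁ = I/4 + W/12`
and the Pauli tensors are orthogonal. For a stabilizer state `σ = (I + A + B + AB)/4`, orthogonality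
gives `tr(σ W) = (tr(AW) + tr(BW) + tr(ABW))/4`, and `tr(PW)` vanishes unless `P` is `±` one of the
five terms of `W`. These terms anticommute pairwise while `A`, `B`, `AB` commute pairwise, so at most
one summand survives and `Re tr(σ W) ≤ 1`. The half-space `Re tr(· W) ≤ 1` thus separates `ρ₁` from
the convex hull of the stabilizer states. -/

theorem notMem_convexHull_of_forall_le_of_lt {E : Type*} [AddCommGroup E] [Module ℝ E]
    (f : E →ₗ[ℝ] ℝ) {s : Set E} {x : E} {c : ℝ} (hs : ∀ y ∈ s, f y ≤ c) (hx : c < f x) :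
    x ∉ convexHull ℝ s :=
  fun h => not_le_of_gt hx (convexHull_min hs (convex_halfSpace_le f.isLinear c) h)

def pauliMulIndex : Fin 4 → Fin 4 → Fin 4 :=
  ![![0, 1, 2, 3], ![1, 0, 3, 2], ![2, 3, 0, 1], ![3, 2, 1, 0]]

def pauliMulPhase : Fin 4 → Fin 4 → ℕ :=
  ![![0, 0, 0, 0], ![0, 0, 1, 3], ![0, 3, 0, 1], ![0, 1, 3, 0]]

theorem pauli_mul_pauli (a b : Fin 4) :
    Pauli a * Pauli b = Complex.I ^ pauliMulPhase a b • Pauli (pauliMulIndex a b) := by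
  fin_cases a <;> fin_cases b <;> ext i j <;> fin_cases i <;> fin_cases j <;>
    simp [Pauli, PX, PY, PZ, Id2, pauliMulIndex, pauliMulPhase, Matrix.mul_apply, Fin.sum_univ_two]

theorem trace_pauli (a : Fin 4) : trace (Pauli a) = if a = 0 then 2 else 0 := by
  fin_cases a <;> simp [Pauli, PX, PY, PZ, Id2, trace_fin_two]

theorem trace_pauli_mul_pauli (a b : Fin 4) :
    trace (Pauli a * Pauli b) = if a = b then 2 else 0 := by
  rw [pauli_mul_pauli, trace_smul, trace_pauli]
  fin_cases a <;> fin_cases b <;> simp [pauliMulIndex, pauliMulPhase]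

theorem kronecker_pauli_mul_kronecker_pauli (p₁ p₂ q₁ q₂ : Fin 4) :
    (Pauli p₁ ⊗ₖ Pauli p₂) * (Pauli q₁ ⊗ₖ Pauli q₂) =
      Complex.I ^ (pauliMulPhase p₁ q₁ + pauliMulPhase p₂ q₂) •
        (Pauli (pauliMulIndex p₁ q₁) ⊗ₖ Pauli (pauliMulIndex p₂ q₂)) := by
  rw [← mul_kronecker_mul, pauli_mul_pauli, pauli_mul_pauli, smul_kronecker, kronecker_smul,
    smul_smul, pow_add]

theorem kronecker_pauli_mul_self (a b : Fin 4) :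
    (Pauli a ⊗ₖ Pauli b) * (Pauli a ⊗ₖ Pauli b) = 1 := by
  rw [kronecker_pauli_mul_kronecker_pauli]
  fin_cases a <;> fin_cases b <;>
    simp [pauliMulIndex, pauliMulPhase, Pauli, Id2]

theorem kronecker_pauli_ne_zero (a b : Fin 4) : Pauli a ⊗ₖ Pauli b ≠ 0 := by
  intro h
  simpa [h] using kronecker_pauli_mul_self a b

theorem pauliMulIndex_comm (a b : Fin 4) : pauliMulIndex a b = pauliMulIndex b a := by
  revert a b; decide

noncomputable def pauliExpansion (c : Fin 4 → Fin 4 → ℂ) :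
    Matrix (Fin 2 × Fin 2) (Fin 2 × Fin 2) ℂ :=
  ∑ a, ∑ b, c a b • (Pauli a ⊗ₖ Pauli b)

theorem trace_kronecker_pauli_mul_pauliExpansion (c : Fin 4 → Fin 4 → ℂ) (a b : Fin 4) :
    trace ((Pauli a ⊗ₖ Pauli b) * pauliExpansion c) = 4 * c a b := by
  simp only [pauliExpansion, Finset.mul_sum, mul_smul_comm, trace_sum, trace_smul,
    ← mul_kronecker_mul, trace_kronecker, trace_pauli_mul_pauli, smul_eq_mul]
  simp only [mul_ite, ite_mul, zero_mul, mul_zero, Finset.sum_ite_eq, Finset.mem_univ,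
    if_true]
  ring

def witnessCoeff : Fin 4 → Fin 4 → ℤ :=
  ![![0, 0, 1, 1], ![0, -1, 0, 0], ![0, 1, 0, 0], ![0, 1, 0, 0]]

noncomputable def witness : Matrix (Fin 2 × Fin 2) (Fin 2 × Fin 2) ℂ :=
  pauliExpansion fun a b => (witnessCoeff a b : ℂ)

theorem rho1_eq : rho1 = (1 / 4 : ℂ) • (Id2 ⊗ₖ Id2) + (1 / 12 : ℂ) • witness := by
  simp only [rho1, witness, pauliExpansion, Fin.sum_univ_four, witnessCoeff, Pauli, cons_val',
    cons_val_fin_one, cons_val_zero, cons_val_one, cons_val, Int.cast_zero, Int.cast_one,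
    Int.cast_neg, zero_smul, one_smul, neg_smul, add_zero, zero_add]
  module

theorem trace_kronecker_pauli_mul_witness (a b : Fin 4) :
    trace ((Pauli a ⊗ₖ Pauli b) * witness) = 4 * witnessCoeff a b :=
  trace_kronecker_pauli_mul_pauliExpansion _ a b

theorem trace_id_kronecker_id_mul_witness : trace ((Id2 ⊗ₖ Id2) * witness) = 0 :=
  (trace_kronecker_pauli_mul_witness 0 0).trans (by simp [witnessCoeff])

theorem trace_rho1_mul_witness : trace (rho1 * witness) = 5 / 3 := by
  have hW : trace (witness * witness) = 20 := by
    conv_lhs => enter [1, 1]; rw [witness, pauliExpansion]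
    simp only [Finset.sum_mul, smul_mul_assoc, trace_sum, trace_smul,
      trace_kronecker_pauli_mul_witness, smul_eq_mul]
    simp only [witnessCoeff, Fin.sum_univ_four, cons_val', cons_val_fin_one, cons_val_zero,
      cons_val_one, cons_val, Int.cast_zero, Int.cast_one, Int.cast_neg, mul_zero, add_zero,
      zero_add, mul_one, one_mul, mul_neg, neg_mul, neg_neg]
    norm_num
  rw [rho1_eq, add_mul, trace_add, smul_mul_assoc, smul_mul_assoc, trace_smul, trace_smul,
    trace_id_kronecker_id_mul_witness, hW]
  norm_num

theorem abs_witnessCoeff_le_one (a b : Fin 4) : |witnessCoeff a b| ≤ 1 := by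
  revert a b; decide

theorem re_mul_witnessCoeff_le_one {u : ℂ} (hu : ‖u‖ = 1) (a b : Fin 4) :
    (u * witnessCoeff a b).re ≤ 1 := by
  calc (u * witnessCoeff a b).re ≤ ‖u * witnessCoeff a b‖ := Complex.re_le_norm _
    _ = |(witnessCoeff a b : ℝ)| := by simp [hu]
    _ ≤ 1 := mod_cast abs_witnessCoeff_le_one a b

theorem modEq_of_smul_kronecker_pauli_commute {p₁ p₂ q₁ q₂ : Fin 4} {s t : ℂ} (hs : s ≠ 0)
    (ht : t ≠ 0)
    (h : (s • (Pauli p₁ ⊗ₖ Pauli p₂)) * (t • (Pauli q₁ ⊗ₖ Pauli q₂)) =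
      (t • (Pauli q₁ ⊗ₖ Pauli q₂)) * (s • (Pauli p₁ ⊗ₖ Pauli p₂))) :
    pauliMulPhase p₁ q₁ + pauliMulPhase p₂ q₂ ≡ pauliMulPhase q₁ p₁ + pauliMulPhase q₂ p₂
      [MOD 4] := by
  rw [smul_mul_smul_comm, smul_mul_smul_comm, mul_comm t s] at h
  replace h := smul_right_injective _ (mul_ne_zero hs ht) h
  rw [kronecker_pauli_mul_kronecker_pauli, kronecker_pauli_mul_kronecker_pauli,
    pauliMulIndex_comm q₁, pauliMulIndex_comm q₂] at h
  replace h := smul_left_injective ℂ (kronecker_pauli_ne_zero _ _) h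
  rw [Complex.I_pow_eq_pow_mod (pauliMulPhase p₁ q₁ + _),
    Complex.I_pow_eq_pow_mod (pauliMulPhase q₁ p₁ + _)] at h
  exact Complex.isPrimitiveRoot_I.pow_inj (Nat.mod_lt _ four_pos) (Nat.mod_lt _ four_pos) h

theorem ne_zero_of_smul_kronecker_pauli_ne {p₁ p₂ : Fin 4} {s : ℂ} (hs : s = 1 ∨ s = -1)
    (h₁ : s • (Pauli p₁ ⊗ₖ Pauli p₂) ≠ Id2 ⊗ₖ Id2)
    (h₂ : s • (Pauli p₁ ⊗ₖ Pauli p₂) ≠ -(Id2 ⊗ₖ Id2)) : (p₁, p₂) ≠ (0, 0) := by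
  rw [Ne, Prod.mk.injEq]
  rintro ⟨rfl, rfl⟩
  rcases hs with rfl | rfl <;> simp [Pauli] at h₁ h₂

theorem ne_of_smul_kronecker_pauli_ne {p₁ p₂ q₁ q₂ : Fin 4} {s t : ℂ} (hs : s = 1 ∨ s = -1)
    (ht : t = 1 ∨ t = -1) (h₁ : s • (Pauli p₁ ⊗ₖ Pauli p₂) ≠ t • (Pauli q₁ ⊗ₖ Pauli q₂))
    (h₂ : s • (Pauli p₁ ⊗ₖ Pauli p₂) ≠ -(t • (Pauli q₁ ⊗ₖ Pauli q₂))) :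
    (p₁, p₂) ≠ (q₁, q₂) := by
  rw [Ne, Prod.mk.injEq]
  rintro ⟨rfl, rfl⟩
  rcases hs with rfl | rfl <;> rcases ht with rfl | rfl <;> simp at h₁ h₂

-- The five Pauli terms of the witness anticommute pairwise, while `A`, `B`, `AB` commute pairwise.
set_option synthInstance.maxSize 1024 in
theorem witnessCoeff_eq_zero_of_modEq : ∀ p₁ p₂ q₁ q₂ : Fin 4,
    (p₁, p₂) ≠ (0, 0) → (q₁, q₂) ≠ (0, 0) → (p₁, p₂) ≠ (q₁, q₂) →
    pauliMulPhase p₁ q₁ + pauliMulPhase p₂ q₂ ≡ pauliMulPhase q₁ p₁ + pauliMulPhase q₂ p₂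
      [MOD 4] →
    (witnessCoeff p₁ p₂ = 0 ∧ witnessCoeff q₁ q₂ = 0) ∨
    (witnessCoeff p₁ p₂ = 0 ∧ witnessCoeff (pauliMulIndex p₁ q₁) (pauliMulIndex p₂ q₂) = 0) ∨
    (witnessCoeff q₁ q₂ = 0 ∧ witnessCoeff (pauliMulIndex p₁ q₁) (pauliMulIndex p₂ q₂) = 0) := by
  unfold Nat.ModEq
  decide

theorem re_trace_mul_witness_le_one {σ : Matrix (Fin 2 × Fin 2) (Fin 2 × Fin 2) ℂ}
    (hσ : σ ∈ twoQubitStabStates) : (trace (σ * witness)).re ≤ 1 := by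
  obtain ⟨p₁, p₂, q₁, q₂, s, t, A, B, hs, ht, rfl, rfl, hA₁, hA₂, hB₁, hB₂, hAB₁, hAB₂, hcomm,
    rfl⟩ := hσ
  have hs₁ : ‖s‖ = 1 := by rcases hs with rfl | rfl <;> simp
  have ht₁ : ‖t‖ = 1 := by rcases ht with rfl | rfl <;> simp
  have hphase := modEq_of_smul_kronecker_pauli_commute (norm_ne_zero_iff.mp (hs₁ ▸ one_ne_zero))
    (norm_ne_zero_iff.mp (ht₁ ▸ one_ne_zero)) hcomm
  have hst₁ : ‖s * t * Complex.I ^ (pauliMulPhase p₁ q₁ + pauliMulPhase p₂ q₂)‖ = 1 := by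
    simp [hs₁, ht₁]
  rw [smul_mul_smul_comm, kronecker_pauli_mul_kronecker_pauli, smul_smul]
  simp only [smul_mul_assoc, add_mul, trace_add, trace_smul, trace_id_kronecker_id_mul_witness,
    trace_kronecker_pauli_mul_witness, smul_eq_mul]
  rcases witnessCoeff_eq_zero_of_modEq p₁ p₂ q₁ q₂ (ne_zero_of_smul_kronecker_pauli_ne hs hA₁ hA₂)
    (ne_zero_of_smul_kronecker_pauli_ne ht hB₁ hB₂) (ne_of_smul_kronecker_pauli_ne hs ht hAB₁ hAB₂)
    hphase with ⟨h₁, h₂⟩ | ⟨h₁, h₂⟩ | ⟨h₁, h₂⟩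
  · convert re_mul_witnessCoeff_le_one hst₁ (pauliMulIndex p₁ q₁) (pauliMulIndex p₂ q₂)
      using 2
    simp only [h₁, h₂]
    ring
  · convert re_mul_witnessCoeff_le_one ht₁ q₁ q₂ using 2
    simp only [h₁, h₂]
    ring
  · convert re_mul_witnessCoeff_le_one hs₁ p₁ p₂ using 2
    simp only [h₁, h₂]
    ring

/-- `ρ₁` is not a convex combination of two-qubit stabilizer states. -/
theorem stmt_14 : rho1 ∉ convexHull ℝ twoQubitStabStates := by
  let f : Matrix (Fin 2 × Fin 2) (Fin 2 × Fin 2) ℂ →ₗ[ℝ] ℝ :=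
    Complex.reLm ∘ₗ (traceLinearMap _ ℂ ℂ).restrictScalars ℝ ∘ₗ LinearMap.mulRight ℝ witness
  refine notMem_convexHull_of_forall_le_of_lt f (fun σ hσ => re_trace_mul_witness_le_one hσ) ?_
  change 1 < (trace (rho1 * witness)).re
  rw [trace_rho1_mul_witness]
  norm_num
end

section
/- Let x, y, z be real numbers and let σ = ρ(x,y,z) ⊗ ρ(x,−y,z) be the 4×4 Kronecker product matrix. Then the 2×2 matrix formed from σ's entries at the even-parity basis indices, namely [[σ_{00,00}, σ_{00,11}], [σ_{11,00}, σ_{11,11}]], equals ((1+z²)/2) · ρ( (x²+y²)/(1+z²), 0, 2z/(1+z²) ). In particular, a postselected parity check on the pair of mirror-image states ρ(x,y,z) and ρ(x,−y,z) zeroes out the y coordinate and maps (r = √(x²+y²), z) to (r²/(1+z²), 2z/(1+z²)). -/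
open Matrix Kronecker

set_option maxHeartbeats 2000000

/-- A postselected parity check on the mirror-image pair `ρ(x,y,z)` and `ρ(x,−y,z)`
extracts the even-parity `2×2` submatrix, which equals
`((1+z²)/2) · ρ((x²+y²)/(1+z²), 0, 2z/(1+z²))`: the `y` coordinate is zeroed out. -/
theorem stmt_16 (x y z : ℝ) :
    let σ : Matrix (Fin 2 × Fin 2) (Fin 2 × Fin 2) ℂ := rho x y z ⊗ₖ rho x (-y) z
    !![σ (0, 0) (0, 0), σ (0, 0) (1, 1); σ (1, 1) (0, 0), σ (1, 1) (1, 1)] =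
      (((1 + z ^ 2) / 2 : ℝ) : ℂ) •
        rho ((x ^ 2 + y ^ 2) / (1 + z ^ 2)) 0 (2 * z / (1 + z ^ 2)) := by
  have hz : ((1 : ℂ) + (z : ℂ) ^ 2) ≠ 0 := by
    have h : (0 : ℝ) < 1 + z ^ 2 := by positivity
    exact_mod_cast (Complex.ofReal_ne_zero.mpr h.ne')
  intro σ
  ext i j
  fin_cases i <;> fin_cases j <;>
    simp [σ, rho, PX, PY, PZ, Matrix.kroneckerMap_apply, Matrix.one_apply,
      Matrix.smul_apply, Matrix.add_apply] <;>
    push_cast <;> field_simp <;> ring_nf <;> simp [Complex.I_sq] <;> ring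
end
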